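/- (Coercivity, Lemma 4, concrete form.) Let d ≥ 1, ν > 0, let a : ℝ^d → ℝ^d be a smooth vector field with ∇·a = 0, and let τ_M : ℝ^d → ℝ be continuous with τ_M ≥ 0 pointwise. Let v : ℝ^d → ℝ^d be a smooth compactly supported vector field with ∇·v = 0 and let q : ℝ^d → ℝ be smooth and compactly supported. If the inverse-estimate hypothesis ∫_{ℝ^d} τ_M |∇·(2ν∇ˢv)|² dx ≤ ∫_{ℝ^d} 2ν |∇ˢv|² dx holds (the concrete form of Assumptions 1 and 2 of the paper), then A_red((v,q),(v,q)) ≥ (1/2) |||(v,q)|||², where |||(v,q)|||² = k(v,v) + ∫_{ℝ^d} τ_M |a·∇v + ∇q|² dx. -/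

import Mathlib

open MeasureTheory

noncomputable section

variable {d : ℕ}

/-- Partial derivative `∂_j f` of a scalar field. -/
def pder (f : (Fin d → ℝ) → ℝ) (j : Fin d) (x : Fin d → ℝ) : ℝ :=
  fderiv ℝ f x (Pi.single j 1)

/-- Divergence `∇·v` of a vector field. -/
def vdiv (v : (Fin d → ℝ) → Fin d → ℝ) (x : Fin d → ℝ) : ℝ :=
  ∑ i, pder (fun y => v y i) i x

/-- `(a·∇v)_i = ∑_j a_j ∂_j v_i`. -/
def adv (a v : (Fin d → ℝ) → Fin d → ℝ) (x : Fin d → ℝ) (i : Fin d) : ℝ :=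
  ∑ j, a x j * pder (fun y => v y i) j x

/-- Gradient `(∇q)_i` of a scalar field. -/
def grd (q : (Fin d → ℝ) → ℝ) (x : Fin d → ℝ) (i : Fin d) : ℝ :=
  pder q i x

/-- Symmetrized gradient `(∇ˢv)_{ij} = (∂_j v_i + ∂_i v_j)/2`. -/
def symGrad (v : (Fin d → ℝ) → Fin d → ℝ) (x : Fin d → ℝ) (i j : Fin d) : ℝ :=
  (pder (fun y => v y i) j x + pder (fun y => v y j) i x) / 2

/-- `(∇·(2ν∇ˢv))_i`, the row-wise divergence of the viscous stress. -/
def divVisc (ν : ℝ) (v : (Fin d → ℝ) → Fin d → ℝ) (x : Fin d → ℝ) (i : Fin d) : ℝ :=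
  ∑ j, pder (fun y => 2 * ν * symGrad v y i j) j x

/-- Convection form `c(a,v₁,v₂) = ∫ (a·∇v₁)·v₂`. -/
def convc (a v₁ v₂ : (Fin d → ℝ) → Fin d → ℝ) : ℝ :=
  ∫ x, ∑ i, adv a v₁ x i * v₂ x i

/-- Conservative convection form `c_cons(a,v₁,v₂) = −∫ v₁·(a·∇v₂)`. -/
def convcons (a v₁ v₂ : (Fin d → ℝ) → Fin d → ℝ) : ℝ :=
  -∫ x, ∑ i, v₁ x i * adv a v₂ x i

/-- Skew convection form `c_skew = (c + c_cons)/2`. -/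
def convskew (a v₁ v₂ : (Fin d → ℝ) → Fin d → ℝ) : ℝ :=
  (convc a v₁ v₂ + convcons a v₁ v₂) / 2

/-- Viscous form `k(v₁,v₂) = ∫ 2ν ∇ˢv₁ : ∇ˢv₂`. -/
def kvisc (ν : ℝ) (v₁ v₂ : (Fin d → ℝ) → Fin d → ℝ) : ℝ :=
  ∫ x, ∑ i, ∑ j, 2 * ν * symGrad v₁ x i j * symGrad v₂ x i j

/-- Reduced Oseen form `A_red((w,r),(v,q))`. -/
def Ared (ν : ℝ) (a : (Fin d → ℝ) → Fin d → ℝ) (τ : (Fin d → ℝ) → ℝ)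
    (w : (Fin d → ℝ) → Fin d → ℝ) (r : (Fin d → ℝ) → ℝ)
    (v : (Fin d → ℝ) → Fin d → ℝ) (q : (Fin d → ℝ) → ℝ) : ℝ :=
  convc a w v + kvisc ν w v +
    ∫ x, τ x * ∑ i, (adv a w x i - divVisc ν w x i + grd r x i) * (adv a v x i + grd q x i)

/-- `|||(v,q)|||² = k(v,v) + ∫ τ_M |a·∇v + ∇q|²`. -/
def tnormSq (ν : ℝ) (a : (Fin d → ℝ) → Fin d → ℝ) (τ : (Fin d → ℝ) → ℝ)
    (v : (Fin d → ℝ) → Fin d → ℝ) (q : (Fin d → ℝ) → ℝ) : ℝ :=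
  kvisc ν v v + ∫ x, τ x * ∑ i, (adv a v x i + grd q x i) ^ 2

/-- `|||(v,q)|||`. -/
def tnorm (ν : ℝ) (a : (Fin d → ℝ) → Fin d → ℝ) (τ : (Fin d → ℝ) → ℝ)
    (v : (Fin d → ℝ) → Fin d → ℝ) (q : (Fin d → ℝ) → ℝ) : ℝ :=
  Real.sqrt (tnormSq ν a τ v q)

/-- `|||(v,q)|||₊² = |||(v,q)|||² + ∫ τ_M |∇·(2ν∇ˢv)|² + ∫ τ_M⁻¹ |v|²`. -/
def tnormPlusSq (ν : ℝ) (a : (Fin d → ℝ) → Fin d → ℝ) (τ : (Fin d → ℝ) → ℝ)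
    (v : (Fin d → ℝ) → Fin d → ℝ) (q : (Fin d → ℝ) → ℝ) : ℝ :=
  tnormSq ν a τ v q + (∫ x, τ x * ∑ i, (divVisc ν v x i) ^ 2)
    + ∫ x, (τ x)⁻¹ * ∑ i, (v x i) ^ 2

/-- `|||(v,q)|||₊`. -/
def tnormPlus (ν : ℝ) (a : (Fin d → ℝ) → Fin d → ℝ) (τ : (Fin d → ℝ) → ℝ)
    (v : (Fin d → ℝ) → Fin d → ℝ) (q : (Fin d → ℝ) → ℝ) : ℝ :=
  Real.sqrt (tnormPlusSq ν a τ v q)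


section AuxCoercivity
variable {d : ℕ}

lemma contDiff_pder {f : (Fin d → ℝ) → ℝ} (hf : ContDiff ℝ (⊤ : ℕ∞) f) (j : Fin d) :
    ContDiff ℝ (⊤ : ℕ∞) (pder f j) :=
  (hf.fderiv_right (by simp)).clm_apply contDiff_const

lemma hcs_pder {f : (Fin d → ℝ) → ℝ} (hc : HasCompactSupport f) (j : Fin d) :
    HasCompactSupport (pder f j) :=
  (hc.fderiv ℝ).comp_left (g := fun L : (Fin d → ℝ) →L[ℝ] ℝ => L (Pi.single j 1)) rfl

lemma hcs_zero : HasCompactSupport (fun _ : (Fin d → ℝ) => (0:ℝ)) := by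
  simp [HasCompactSupport, tsupport]

lemma hcs_sum {ι : Type*} (s : Finset ι) (f : ι → (Fin d → ℝ) → ℝ)
    (h : ∀ i ∈ s, HasCompactSupport (f i)) :
    HasCompactSupport (fun x => ∑ i ∈ s, f i x) := by
  classical
  induction s using Finset.induction with
  | empty => simpa using hcs_zero
  | @insert j s hni ih =>
      simp only [Finset.sum_insert hni]
      exact (h j (by simp)).add (ih fun i hi => h i (by simp [hi]))

lemma hcs_mul_left {f g : (Fin d → ℝ) → ℝ} (hg : HasCompactSupport g) :
    HasCompactSupport (fun x => f x * g x) :=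
  HasCompactSupport.mul_left (f := f) hg

lemma hcs_sq {f : (Fin d → ℝ) → ℝ} (h : HasCompactSupport f) :
    HasCompactSupport (fun x => f x ^ 2) :=
  h.comp_left (g := fun t : ℝ => t ^ 2) (by simp)

lemma integrable_cc {f : (Fin d → ℝ) → ℝ} (hf : Continuous f) (hc : HasCompactSupport f) :
    Integrable f :=
  hf.integrable_of_hasCompactSupport hc

end AuxCoercivity

/-- coercivity of the reduced Oseen form (Lemma 4, concrete form). -/
theorem oseen_coercivity (hd : 1 ≤ d) (ν : ℝ) (hν : 0 < ν)
    (a : (Fin d → ℝ) → Fin d → ℝ) (ha : ContDiff ℝ (⊤ : ℕ∞) a) (hdiva : ∀ x, vdiv a x = 0)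
    (τ : (Fin d → ℝ) → ℝ) (hτ : Continuous τ) (hτ0 : ∀ x, 0 ≤ τ x)
    (v : (Fin d → ℝ) → Fin d → ℝ) (hv : ContDiff ℝ (⊤ : ℕ∞) v) (hvc : HasCompactSupport v)
    (hdivv : ∀ x, vdiv v x = 0)
    (q : (Fin d → ℝ) → ℝ) (hq : ContDiff ℝ (⊤ : ℕ∞) q) (hqc : HasCompactSupport q)
    (hinv : (∫ x, τ x * ∑ i, (divVisc ν v x i) ^ 2) ≤
      ∫ x, ∑ i, ∑ j, 2 * ν * (symGrad v x i j) ^ 2) :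
    (1 / 2) * tnormSq ν a τ v q ≤ Ared ν a τ v q v q :=  by
  classical
  -- basic smoothness / support facts
  have hvi : ∀ i, ContDiff ℝ (⊤ : ℕ∞) (fun y => v y i) := contDiff_pi.1 hv
  have hvci : ∀ i, HasCompactSupport (fun y => v y i) :=
    fun i => hvc.comp_left (g := fun w : Fin d → ℝ => w i) rfl
  have hai : ∀ i, ContDiff ℝ (⊤ : ℕ∞) (fun y => a y i) := contDiff_pi.1 ha
  have cP : ∀ i j : Fin d, Continuous (pder (fun y => v y i) j) :=
    fun i j => (contDiff_pder (hvi i) j).continuous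
  have sP : ∀ i j : Fin d, HasCompactSupport (pder (fun y => v y i) j) :=
    fun i j => hcs_pder (hvci i) j
  have cadv : ∀ i : Fin d, Continuous (fun x => adv a v x i) := fun i => by
    unfold adv
    exact continuous_finset_sum _ fun j _ =>
      ((continuous_apply j).comp ha.continuous).mul (cP i j)
  have sadv : ∀ i : Fin d, HasCompactSupport (fun x => adv a v x i) := fun i => by
    unfold adv
    exact hcs_sum _ _ fun j _ => hcs_mul_left (sP i j)
  have cgrd : ∀ i : Fin d, Continuous (fun x => grd q x i) :=
    fun i => (contDiff_pder hq i).continuous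
  have sgrd : ∀ i : Fin d, HasCompactSupport (fun x => grd q x i) := fun i => hcs_pder hqc i
  have cS : ∀ i : Fin d, Continuous (fun x => adv a v x i + grd q x i) :=
    fun i => (cadv i).add (cgrd i)
  have sS : ∀ i : Fin d, HasCompactSupport (fun x => adv a v x i + grd q x i) :=
    fun i => (sadv i).add (sgrd i)
  have hsg : ∀ i j : Fin d, ContDiff ℝ (⊤ : ℕ∞) (fun y => 2 * ν * symGrad v y i j) := fun i j => by
    unfold symGrad
    exact contDiff_const.mul
      (((contDiff_pder (hvi i) j).add (contDiff_pder (hvi j) i)).div_const 2)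
  have ssg : ∀ i j : Fin d, HasCompactSupport (fun y => 2 * ν * symGrad v y i j) := fun i j =>
    ((sP i j).add (sP j i)).comp_left (g := fun t : ℝ => 2 * ν * (t / 2)) (by simp)
  have cD : ∀ i : Fin d, Continuous (fun x => divVisc ν v x i) := fun i => by
    unfold divVisc
    exact continuous_finset_sum _ fun j _ => (contDiff_pder (hsg i j) j).continuous
  have sD : ∀ i : Fin d, HasCompactSupport (fun x => divVisc ν v x i) := fun i => by
    unfold divVisc
    exact hcs_sum _ _ fun j _ => hcs_pder (ssg i j) j
  -- integrability of the three key densities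
  have intT : Integrable (fun x => τ x * ∑ i, (adv a v x i + grd q x i) ^ 2) :=
    integrable_cc (hτ.mul (continuous_finset_sum _ fun i _ => (cS i).pow 2))
      (hcs_mul_left (hcs_sum _ _ fun i _ => hcs_sq (sS i)))
  have intP : Integrable (fun x => τ x * ∑ i, (divVisc ν v x i) ^ 2) :=
    integrable_cc (hτ.mul (continuous_finset_sum _ fun i _ => (cD i).pow 2))
      (hcs_mul_left (hcs_sum _ _ fun i _ => hcs_sq (sD i)))
  have intM : Integrable
      (fun x => τ x * ∑ i, divVisc ν v x i * (adv a v x i + grd q x i)) :=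
    integrable_cc (hτ.mul (continuous_finset_sum _ fun i _ => (cD i).mul (cS i)))
      (hcs_mul_left (hcs_sum _ _ fun i _ => hcs_mul_left (sS i)))
  -- Step 1 : the inverse estimate in terms of `kvisc`
  have hK : (∫ x, ∑ i, ∑ j, 2 * ν * (symGrad v x i j) ^ 2) = kvisc ν v v := by
    unfold kvisc
    congr 1
    funext x
    exact Finset.sum_congr rfl fun i _ => Finset.sum_congr rfl fun j _ => by ring
  have hPK : (∫ x, τ x * ∑ i, (divVisc ν v x i) ^ 2) ≤ kvisc ν v v := hK ▸ hinv
  -- Step 2 : the convection term vanishes: convc a v v = 0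
  set w : (Fin d → ℝ) → ℝ := fun x => ∑ i, v x i * v x i with hwdef
  have hwsm : ContDiff ℝ (⊤ : ℕ∞) w := ContDiff.sum fun i _ => (hvi i).mul (hvi i)
  have hwcs : HasCompactSupport w := hcs_sum _ _ fun i _ => hcs_mul_left (hvci i)
  have hcw : Continuous w := hwsm.continuous
  have hpw : ∀ (j : Fin d) (x : Fin d → ℝ),
      pder w j x = ∑ i, 2 * (v x i * pder (fun y => v y i) j x) := by
    intro j x
    have hdiff : ∀ i : Fin d, DifferentiableAt ℝ (fun y => v y i) x :=
      fun i => ((hvi i).differentiable (by simp)) x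
    rw [hwdef]
    rw [pder, fderiv_fun_sum (fun i _ => (hdiff i).fun_mul (hdiff i))]
    rw [ContinuousLinearMap.sum_apply]
    refine Finset.sum_congr rfl fun i _ => ?_
    rw [fderiv_fun_mul (hdiff i) (hdiff i)]
    simp [pder]
    ring
  have hpt1 : ∀ x, (∑ i, adv a v x i * v x i) = ∑ j, a x j * pder w j x / 2 := by
    intro x
    simp only [adv, Finset.sum_mul]
    rw [Finset.sum_comm]
    refine Finset.sum_congr rfl fun j _ => ?_
    rw [hpw j x, Finset.mul_sum, Finset.sum_div]
    refine Finset.sum_congr rfl fun i _ => ?_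
    ring
  have int1 : ∀ j : Fin d, Integrable (fun x => pder (fun y => a y j) j x * w x) :=
    fun j => integrable_cc ((contDiff_pder (hai j) j).continuous.mul hcw)
      (hcs_mul_left hwcs)
  have int2 : ∀ j : Fin d, Integrable (fun x => a x j * pder w j x) :=
    fun j => integrable_cc (((continuous_apply j).comp ha.continuous).mul
        (contDiff_pder hwsm j).continuous)
      (hcs_mul_left (hcs_pder hwcs j))
  have int3 : ∀ j : Fin d, Integrable (fun x => a x j * w x) :=
    fun j => integrable_cc (((continuous_apply j).comp ha.continuous).mul hcw)
      (hcs_mul_left hwcs)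
  have hibp : ∀ j : Fin d,
      (∫ x, a x j * pder w j x) = - ∫ x, pder (fun y => a y j) j x * w x := fun j =>
    integral_mul_fderiv_eq_neg_fderiv_mul_of_integrable (int1 j) (int2 j) (int3 j)
      (fun x _ => (hai j).differentiable (by simp) x) (fun x _ => hwsm.differentiable (by simp) x)
  have hzero : (∑ j : Fin d, ∫ x, pder (fun y => a y j) j x * w x) = 0 := by
    rw [← integral_finset_sum _ fun j _ => int1 j]
    have hx : ∀ x, (∑ j, pder (fun y => a y j) j x * w x) = 0 := by
      intro x
      rw [← Finset.sum_mul]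
      rw [show (∑ j, pder (fun y => a y j) j x) = vdiv a x from rfl, hdiva x, zero_mul]
    simp only [hx, integral_zero]
  have hc0 : convc a v v = 0 := by
    unfold convc
    simp only [hpt1]
    rw [integral_finset_sum _ (fun j _ => (int2 j).div_const 2)]
    have hdiv2 : ∀ j : Fin d,
        (∫ x, a x j * pder w j x / 2) = (∫ x, a x j * pder w j x) / 2 :=
      fun j => integral_div 2 _
    simp only [hdiv2, hibp]
    rw [← Finset.sum_div, Finset.sum_neg_distrib, hzero, neg_zero, zero_div]
  -- Step 3 : split the stabilization term
  have hsplit : (∫ x, τ x *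
        ∑ i, (adv a v x i - divVisc ν v x i + grd q x i) * (adv a v x i + grd q x i))
      = (∫ x, τ x * ∑ i, (adv a v x i + grd q x i) ^ 2)
        - ∫ x, τ x * ∑ i, divVisc ν v x i * (adv a v x i + grd q x i) := by
    rw [← integral_sub intT intM]
    congr 1
    funext x
    rw [← mul_sub, ← Finset.sum_sub_distrib]
    congr 1
    exact Finset.sum_congr rfl fun i _ => by ring
  -- Step 4 : Cauchy–Schwarz / Young estimate
  have hMle : (∫ x, τ x * ∑ i, divVisc ν v x i * (adv a v x i + grd q x i))
      ≤ (1/2) * (∫ x, τ x * ∑ i, (divVisc ν v x i) ^ 2)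
        + (1/2) * ∫ x, τ x * ∑ i, (adv a v x i + grd q x i) ^ 2 := by
    have hrhs : Integrable (fun x =>
        (1/2) * (τ x * ∑ i, (divVisc ν v x i) ^ 2)
          + (1/2) * (τ x * ∑ i, (adv a v x i + grd q x i) ^ 2)) :=
      (intP.const_mul _).add (intT.const_mul _)
    have hpt : ∀ x, τ x * ∑ i, divVisc ν v x i * (adv a v x i + grd q x i)
        ≤ (1/2) * (τ x * ∑ i, (divVisc ν v x i) ^ 2)
          + (1/2) * (τ x * ∑ i, (adv a v x i + grd q x i) ^ 2) := by
      intro x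
      have h1 : (∑ i, divVisc ν v x i * (adv a v x i + grd q x i))
          ≤ ∑ i, ((divVisc ν v x i) ^ 2 / 2 + (adv a v x i + grd q x i) ^ 2 / 2) := by
        refine Finset.sum_le_sum fun i _ => ?_
        nlinarith [sq_nonneg (divVisc ν v x i - (adv a v x i + grd q x i))]
      calc τ x * ∑ i, divVisc ν v x i * (adv a v x i + grd q x i)
          ≤ τ x * ∑ i, ((divVisc ν v x i) ^ 2 / 2 + (adv a v x i + grd q x i) ^ 2 / 2) :=
            mul_le_mul_of_nonneg_left h1 (hτ0 x)
        _ = (1/2) * (τ x * ∑ i, (divVisc ν v x i) ^ 2)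
            + (1/2) * (τ x * ∑ i, (adv a v x i + grd q x i) ^ 2) := by
            rw [Finset.sum_add_distrib, ← Finset.sum_div, ← Finset.sum_div]
            ring
    calc (∫ x, τ x * ∑ i, divVisc ν v x i * (adv a v x i + grd q x i))
        ≤ ∫ x, ((1/2) * (τ x * ∑ i, (divVisc ν v x i) ^ 2)
            + (1/2) * (τ x * ∑ i, (adv a v x i + grd q x i) ^ 2)) :=
          integral_mono intM hrhs hpt
      _ = (1/2) * (∫ x, τ x * ∑ i, (divVisc ν v x i) ^ 2)
          + (1/2) * ∫ x, τ x * ∑ i, (adv a v x i + grd q x i) ^ 2 := by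
          rw [integral_add (intP.const_mul _) (intT.const_mul _),
            integral_const_mul, integral_const_mul]
  -- conclusion
  unfold Ared tnormSq
  rw [hc0, hsplit]
  linarith [hMle, hPK]
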